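/- arXiv:2509.17139 — 6 statements merged into one kernel-verified Lean document; each statement's English description precedes it below -/
import Mathlib

section
/- Let R ⊆ k[[t]] be a k-subalgebra with maximal ideal 𝔪 = R ∩ t·k[[t]] such that t^c·k[[t]] ⊆ R for some c ≥ 1. Then the set S = v(𝔪) \ v(𝔪²) is finite; more precisely, every element of S is strictly less than min{v(x) : x ∈ 𝔪², x ≠ 0} + c. -/
open PowerSeries

/-!
A nonzero `x ∈ k⟦X⟧` is `X ^ v(x)` times a unit, so every `f` with `v(f) ≥ v(x) + c` is
`x * (X ^ c * g)`, and `X ^ c * g ∈ R`. Hence for every `x` in an ideal `J` of `R`, every order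
`≥ v(x) + c` of an element of `R` lies in `v(J)`. Taking `J = 𝔪²` bounds `v(𝔪) \ v(𝔪²)`, and
`J` is nonzero because it contains `(X ^ (c + 1)) ^ 2`.
-/

/-- The maximal ideal `𝔪 = R ∩ t·k[[t]]` of a subalgebra `R ⊆ k[[t]]`, i.e. the
elements of `R` with zero constant coefficient (equivalently, positive order). -/
noncomputable def mIdeal {k : Type*} [Field k] (R : Subalgebra k (PowerSeries k)) : Ideal R :=
  RingHom.ker ((constantCoeff : PowerSeries k →+* k).comp R.subtype)

/-- The set of valuations `v(I)` of the nonzero elements of an ideal `I ⊆ R ⊆ k[[t]]`.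
(Note `f.order = n` with `n : ℕ` forces `f ≠ 0`, since the zero series has order `⊤`.) -/
def vset {k : Type*} [Field k] {R : Subalgebra k (PowerSeries k)} (I : Ideal R) : Set ℕ :=
  {n | ∃ f ∈ I, (f : PowerSeries k).order = (n : ℕ∞)}

theorem PowerSeries.mul_X_pow_dvd_of_order_add_le {k : Type*} [Field k] {x f : k⟦X⟧} (c : ℕ)
    (h : x.order + c ≤ f.order) : x * X ^ c ∣ f := by
  rcases eq_or_ne x 0 with rfl | hx
  · simp_all
  have hunit : IsUnit (divXPowOrder x) := by
    rw [isUnit_iff_constantCoeff, isUnit_iff_ne_zero, Ne, constantCoeff_divXPowOrder_eq_zero_iff]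
    exact hx
  have hxX : x * X ^ c = X ^ (x.order.toNat + c) * divXPowOrder x := by
    conv_lhs => rw [← X_pow_order_mul_divXPowOrder (f := x)]
    ring
  rw [hxX, hunit.mul_right_dvd, X_pow_dvd_iff]
  intro i hi
  apply coeff_of_lt_order
  calc (i : ℕ∞) < x.order.toNat + c := by exact_mod_cast hi
    _ = x.order + c := by rw [ENat.natCast_toNat (order_eq_top.not.mpr hx)]
    _ ≤ f.order := h

section

variable {k : Type*} [Field k] {R : Subalgebra k k⟦X⟧} {c : ℕ}

theorem mem_ideal_of_order_add_le (hcond : ∀ f : k⟦X⟧, X ^ c * f ∈ R) {J : Ideal R} {x f : R}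
    (hx : x ∈ J) (h : (x : k⟦X⟧).order + c ≤ (f : k⟦X⟧).order) : f ∈ J := by
  obtain ⟨g, hg⟩ := mul_X_pow_dvd_of_order_add_le c h
  have hf : f = x * ⟨X ^ c * g, hcond g⟩ := Subtype.ext (by simp [hg, mul_assoc])
  exact hf ▸ J.mul_mem_right _ hx

theorem lt_order_add_of_mem_vset_diff (hcond : ∀ f : k⟦X⟧, X ^ c * f ∈ R) {I J : Ideal R}
    {s : ℕ} (hs : s ∈ vset I \ vset J) {x : R} (hx : x ∈ J) :
    (s : ℕ∞) < (x : k⟦X⟧).order + c := by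
  obtain ⟨⟨f, -, hf⟩, hsJ⟩ := hs
  by_contra! hle
  exact hsJ ⟨f, mem_ideal_of_order_add_le hcond hx (hf ▸ hle), hf⟩

theorem finite_vset_diff (hcond : ∀ f : k⟦X⟧, X ^ c * f ∈ R) (I : Ideal R) {J : Ideal R}
    {x : R} (hx : x ∈ J) (hx0 : (x : k⟦X⟧) ≠ 0) : (vset I \ vset J).Finite := by
  obtain ⟨n, hn⟩ := ENat.ne_top_iff_exists.mp (order_eq_top.not.mpr hx0)
  refine (Set.finite_Iio (n + c)).subset fun s hs ↦ ?_
  have hlt := lt_order_add_of_mem_vset_diff hcond hs hx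
  rw [← hn] at hlt
  exact_mod_cast hlt

theorem X_pow_succ_mem_mIdeal (hcond : ∀ f : k⟦X⟧, X ^ c * f ∈ R) :
    (⟨X ^ c * X, hcond X⟩ : R) ∈ mIdeal R := by
  simp [mIdeal, RingHom.mem_ker]

end

theorem herzogKunz_set_finite_general {k : Type*} [Field k]
    (R : Subalgebra k (PowerSeries k)) (c : ℕ)
    (hcond : ∀ f : PowerSeries k, (X : PowerSeries k) ^ c * f ∈ R) :
    (vset (mIdeal R) \ vset ((mIdeal R) ^ 2)).Finite ∧
    (∀ s ∈ vset (mIdeal R) \ vset ((mIdeal R) ^ 2),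
      ∀ x ∈ (mIdeal R) ^ 2, (x : PowerSeries k) ≠ 0 →
        (s : ℕ∞) < (x : PowerSeries k).order + (c : ℕ∞)) := by
  have hx := Ideal.pow_mem_pow (X_pow_succ_mem_mIdeal hcond) 2
  have hx0 : ((⟨X ^ c * X, hcond X⟩ ^ 2 : R) : k⟦X⟧) ≠ 0 := by simp [X_ne_zero]
  exact ⟨finite_vset_diff hcond _ hx hx0,
    fun s hs x hx _ ↦ lt_order_add_of_mem_vset_diff hcond hs hx⟩

/-- the set `S = v(𝔪) \ v(𝔪²)` is finite; more precisely every element of `S`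
is strictly smaller than `min v(𝔪²) + c` (expressed as: `s < v(x) + c` for every nonzero
`x ∈ 𝔪²`). -/
theorem herzogKunz_set_finite {k : Type*} [Field k]
    (R : Subalgebra k (PowerSeries k)) (c : ℕ) (hc1 : 1 ≤ c)
    (hcond : ∀ f : PowerSeries k, (X : PowerSeries k) ^ c * f ∈ R) :
    (vset (mIdeal R) \ vset ((mIdeal R) ^ 2)).Finite ∧
    (∀ s ∈ vset (mIdeal R) \ vset ((mIdeal R) ^ 2),
      ∀ x ∈ (mIdeal R) ^ 2, (x : PowerSeries k) ≠ 0 →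
        (s : ℕ∞) < (x : PowerSeries k).order + (c : ℕ∞)) :=
  herzogKunz_set_finite_general R c hcond
end

section
/- Let R ⊆ k[[t]] be a k-subalgebra with 𝔪 = R ∩ t·k[[t]], t^c·k[[t]] ⊆ R, and S = v(𝔪)\v(𝔪²) = {b₁ < … < b_t}. If x₁,…,x_t ∈ 𝔪 satisfy v(xᵢ) = bᵢ, then the images of x₁,…,x_t in 𝔪/𝔪² are linearly independent over k = R/𝔪. -/
set_option synthInstance.maxHeartbeats 400000

open PowerSeries

/-! Among the indices with nonzero coefficient take the smallest, `i₀`. Since the orders `b i`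
strictly increase, every other term of `∑ εᵢ xᵢ` vanishes up to degree `b i₀`, so the sum has
order exactly `b i₀`. A combination lying in `𝔪²` would therefore put `b i₀` into `v(𝔪²)`,
whereas `b i₀ ∈ S = v(𝔪) \ v(𝔪²)`. -/

namespace PowerSeries

variable {A ι : Type*} [Semiring A] [NoZeroDivisors A] [Fintype ι] [LinearOrder ι]

theorem order_sum_C_mul_of_strictMono {b : ι → ℕ} (hb : StrictMono b) {x : ι → A⟦X⟧}
    (hx : ∀ i, (x i).order = b i) {ε : ι → A} {i₀ : ι} (hi₀ : ε i₀ ≠ 0)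
    (hmin : ∀ i, ε i ≠ 0 → i₀ ≤ i) :
    (∑ i, C (ε i) * x i).order = b i₀ := by
  have hother : ∀ i n, n ≤ b i₀ → i ≠ i₀ → ε i * coeff n (x i) = 0 := by
    intro i n hn hi
    by_cases hεi : ε i = 0
    · rw [hεi, zero_mul]
    · have hlt : n < b i := hn.trans_lt (hb ((hmin i hεi).lt_of_ne' hi))
      rw [coeff_of_lt_order n (by rw [hx i]; exact_mod_cast hlt), mul_zero]
  have hcoeff : ∀ n, n ≤ b i₀ → coeff n (∑ i, C (ε i) * x i) = ε i₀ * coeff n (x i₀) := by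
    intro n hn
    simp only [map_sum, coeff_C_mul]
    exact Finset.sum_eq_single_of_mem i₀ (Finset.mem_univ _)
      fun i _ hi => hother i n hn hi
  obtain ⟨hlead, hbelow⟩ := order_eq_nat.mp (hx i₀)
  refine order_eq_nat.mpr ⟨?_, fun n hn => ?_⟩
  · rw [hcoeff _ le_rfl]
    exact mul_ne_zero hi₀ hlead
  · rw [hcoeff n hn.le, hbelow n hn, mul_zero]

end PowerSeries

theorem linearIndependent_mod_sq_general {k : Type*} [Field k]
    (R : Subalgebra k (PowerSeries k))
    (t : ℕ) (b : Fin t → ℕ) (hb : StrictMono b)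
    (hS : vset (mIdeal R) \ vset ((mIdeal R) ^ 2) = Set.range b)
    (x : Fin t → R)
    (hxv : ∀ i, (x i : PowerSeries k).order = (b i : ℕ∞)) :
    ∀ ε : Fin t → k, (∑ i, algebraMap k R (ε i) * x i) ∈ (mIdeal R) ^ 2 →
      ∀ i, ε i = 0 := by
  intro ε hmem
  by_contra! hne
  classical
  obtain ⟨i₀, hi₀, hmin⟩ := Finset.exists_min_image {i | ε i ≠ 0} id
    (by simpa [Finset.Nonempty] using hne)
  have hcoe : ((∑ i, algebraMap k R (ε i) * x i : R) : PowerSeries k)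
      = ∑ i, C (ε i) * (x i : PowerSeries k) := by
    push_cast
    rfl
  have hsq : b i₀ ∈ vset ((mIdeal R) ^ 2) :=
    ⟨_, hmem, hcoe ▸ order_sum_C_mul_of_strictMono hb hxv (by simpa using hi₀)
      fun i hi => hmin i (by simpa using hi)⟩
  have hS_mem : b i₀ ∈ vset (mIdeal R) \ vset ((mIdeal R) ^ 2) := hS ▸ Set.mem_range_self i₀
  exact hS_mem.2 hsq

/-- with `S = v(𝔪)\v(𝔪²) = {b₁ < … < b_t}` and `xᵢ ∈ 𝔪` with `v(xᵢ) = bᵢ`,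
the images of the `xᵢ` in `𝔪/𝔪²` are linearly independent over `k = R/𝔪`: any `k`-linear
combination of the `xᵢ` lying in `𝔪²` has all coefficients zero. -/
theorem linearIndependent_mod_sq {k : Type*} [Field k]
    (R : Subalgebra k (PowerSeries k)) (c : ℕ) (hc1 : 1 ≤ c)
    (hcond : ∀ f : PowerSeries k, (X : PowerSeries k) ^ c * f ∈ R)
    (t : ℕ) (b : Fin t → ℕ) (hb : StrictMono b)
    (hS : vset (mIdeal R) \ vset ((mIdeal R) ^ 2) = Set.range b)
    (x : Fin t → R) (hxm : ∀ i, x i ∈ mIdeal R)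
    (hxv : ∀ i, (x i : PowerSeries k).order = (b i : ℕ∞)) :
    ∀ ε : Fin t → k, (∑ i, algebraMap k R (ε i) * x i) ∈ (mIdeal R) ^ 2 →
      ∀ i, ε i = 0 :=
  linearIndependent_mod_sq_general R t b hb hS x hxv
end

section
/- Let R ⊆ k[[t]] be a k-subalgebra with maximal ideal 𝔪 = R ∩ t·k[[t]] and t^c·k[[t]] ⊆ R. If a₁ < a₂ are the two smallest elements of the Herzog–Kunz set v(𝔪)\v(𝔪²), and w₁ < w₂ are the two smallest minimal generators of the numerical semigroup V(R), then a₁ = w₁ and a₂ = w₂. -/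
/-!
Choose `x ∈ R` of order `w₁`. Every value of `R` below `w₂` is a multiple of `w₁`, so
subtracting leading terms `a • x ^ m` shows that each `f ∈ R` agrees with a polynomial in `x`
modulo `X ^ w₂`. Multiplying two such approximations, every element of `𝔪²` agrees modulo
`X ^ (w₁ + w₂)` with a polynomial in `x` without constant and linear term, so a value of `𝔪²`
below `w₁ + w₂` is `m * w₁` with `m ≥ 2`. Hence neither `w₁` nor `w₂` is a value of `𝔪²`, and
since the Herzog–Kunz set consists of minimal generators, its two smallest elements are `w₁`
and `w₂`.
-/

open PowerSeries

/-- The value semigroup of `R`. -/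
def valueSet {k : Type*} [Field k] (R : Subalgebra k (PowerSeries k)) : Set ℕ :=
  {n | ∃ f ∈ R, f.order = (n : ℕ∞)}

/-- The minimal generators of a numerical semigroup `V ⊆ ℕ`: the nonzero elements of `V`
that are not a sum of two nonzero elements of `V`. -/
def minGens (V : Set ℕ) : Set ℕ :=
  {w ∈ V | w ≠ 0 ∧ ¬ ∃ u u', u ∈ V ∧ u' ∈ V ∧ u ≠ 0 ∧ u' ≠ 0 ∧ u + u' = w}

namespace PowerSeries

theorem X_pow_dvd_iff_le_order {R : Type*} [Semiring R] {φ : R⟦X⟧} {n : ℕ} :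
    X ^ n ∣ φ ↔ (n : ℕ∞) ≤ φ.order := by
  rw [order_eq_emultiplicity_X, pow_dvd_iff_le_emultiplicity]

theorem order_eq_of_X_pow_dvd_sub {R : Type*} [Ring R] {φ ψ : R⟦X⟧} {N : ℕ}
    (h : X ^ N ∣ φ - ψ) (hφ : φ.order < N) : φ.order = ψ.order := by
  have hlt : φ.order < (ψ - φ).order :=
    hφ.trans_le (X_pow_dvd_iff_le_order.mp ((dvd_neg.mpr h).trans (by rw [neg_sub])))
  rw [← sub_add_cancel ψ φ, order_add_of_order_ne _ _ hlt.ne', min_eq_right hlt.le]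

theorem constantCoeff_aeval {R : Type*} [CommSemiring R] {x : R⟦X⟧} (hx : constantCoeff x = 0)
    (p : Polynomial R) : constantCoeff (Polynomial.aeval x p) = p.coeff 0 := by
  rw [Polynomial.aeval_def, Polynomial.hom_eval₂, hx]
  simp [Polynomial.coeff_zero_eq_eval_zero]

theorem order_aeval {R : Type*} [CommRing R] [IsDomain R] {x : R⟦X⟧} {w : ℕ}
    (hx : x.order = w) (hw : w ≠ 0) {q : Polynomial R} (hq : q ≠ 0) :
    (Polynomial.aeval x q).order = (q.natTrailingDegree * w : ℕ) := by
  obtain ⟨t, ht⟩ : ∃ t, q.natTrailingDegree = t := ⟨_, rfl⟩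
  obtain ⟨r, hqr⟩ : Polynomial.X ^ t ∣ q := Polynomial.X_pow_dvd_iff.mpr fun m hm =>
    Polynomial.coeff_eq_zero_of_lt_natTrailingDegree (ht ▸ hm)
  have hx0 : constantCoeff x = 0 :=
    order_ne_zero_iff_constCoeff_eq_zero.mp (by rw [hx]; exact_mod_cast hw)
  have hr0 : r.coeff 0 ≠ 0 := by
    have hqt := Polynomial.coeff_natTrailingDegree_ne_zero.mpr hq
    rwa [ht, hqr, Polynomial.coeff_X_pow_mul', if_pos le_rfl, Nat.sub_self] at hqt
  have hr : (Polynomial.aeval x r).order = 0 := by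
    by_contra h
    rw [← ne_eq, order_ne_zero_iff_constCoeff_eq_zero, constantCoeff_aeval hx0] at h
    exact hr0 h
  rw [ht, hqr, map_mul, map_pow, Polynomial.aeval_X, order_mul, order_pow, hx, hr]
  simp [mul_comm]

variable {k : Type*} [Field k]

theorem exists_X_pow_succ_dvd_sub_smul {φ ψ : k⟦X⟧} {n : ℕ} (hφ : X ^ n ∣ φ)
    (hψ : ψ.order = n) : ∃ a : k, X ^ (n + 1) ∣ φ - a • ψ := by
  obtain ⟨hψn, hψlt⟩ := order_eq_nat.mp hψ
  refine ⟨coeff n φ / coeff n ψ, X_pow_dvd_iff.mpr fun m hm => ?_⟩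
  rcases (Nat.lt_succ_iff.mp hm).lt_or_eq with hm | rfl
  · simp [X_pow_dvd_iff.mp hφ m hm, hψlt m hm]
  · rw [map_sub, coeff_smul, smul_eq_mul, div_mul_cancel₀ _ hψn, sub_self]

end PowerSeries

theorem dvd_of_lt_of_mem_lowerBounds_minGens {V : Set ℕ} {w₁ w₂ : ℕ}
    (hw₂ : w₂ ∈ lowerBounds (minGens V \ {w₁})) {n : ℕ} (hn : n ∈ V) (hlt : n < w₂) :
    w₁ ∣ n := by
  induction n using Nat.strong_induction_on with
  | _ n ih =>
  rcases eq_or_ne n 0 with rfl | h0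
  · exact dvd_zero w₁
  by_cases hmin : n ∈ minGens V
  · rcases eq_or_ne n w₁ with rfl | hne
    · exact dvd_rfl
    · exact absurd (hw₂ ⟨hmin, hne⟩) (not_le.mpr hlt)
  · obtain ⟨u, u', hu, hu', hu0, hu'0, rfl⟩ :
        ∃ u u', u ∈ V ∧ u' ∈ V ∧ u ≠ 0 ∧ u' ≠ 0 ∧ u + u' = n := by
      by_contra h
      exact hmin ⟨hn, h0, h⟩
    exact dvd_add (ih u (by omega) hu (by omega)) (ih u' (by omega) hu' (by omega))

theorem mul_notMem_minGens {V : AddSubmonoid ℕ} {w m : ℕ} (hw : w ∈ V) (hm : 2 ≤ m) :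
    m * w ∉ minGens V := by
  rintro ⟨-, hmw, hirred⟩
  have hw0 : w ≠ 0 := right_ne_zero_of_mul hmw
  obtain ⟨j, rfl⟩ := Nat.exists_eq_add_of_le' hm
  exact hirred ⟨w, (j + 1) * w, hw, by simpa using V.nsmul_mem hw (j + 1), hw0,
    mul_ne_zero j.succ_ne_zero hw0, by ring⟩

section ValueSets

variable {k : Type*} [Field k]

def valueSemigroup (R : Subalgebra k k⟦X⟧) : AddSubmonoid ℕ where
  carrier := valueSet R
  add_mem' := by
    rintro u u' ⟨f, hf, hfu⟩ ⟨f', hf', hfu'⟩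
    exact ⟨f * f', R.mul_mem hf hf', by rw [order_mul, hfu, hfu', Nat.cast_add]⟩
  zero_mem' := ⟨1, R.one_mem, by rw [order_one, Nat.cast_zero]⟩

variable {R : Subalgebra k k⟦X⟧}

theorem mem_mIdeal_iff {f : R} : f ∈ mIdeal R ↔ constantCoeff (f : k⟦X⟧) = 0 := Iff.rfl

theorem mem_vset_mIdeal_iff {n : ℕ} : n ∈ vset (mIdeal R) ↔ n ∈ valueSet R ∧ n ≠ 0 := by
  constructor
  · rintro ⟨f, hf, hfn⟩
    refine ⟨⟨f, f.2, hfn⟩, fun hn => ?_⟩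
    exact (order_ne_zero_iff_constCoeff_eq_zero.mpr (mem_mIdeal_iff.mp hf)) (by simp [hfn, hn])
  · rintro ⟨⟨f, hf, hfn⟩, hn⟩
    exact ⟨⟨f, hf⟩, mem_mIdeal_iff.mpr
      (order_ne_zero_iff_constCoeff_eq_zero.mp (by simpa [hfn] using hn)), hfn⟩

theorem add_mem_vset_mIdeal_sq {u u' : ℕ} (hu : u ∈ vset (mIdeal R))
    (hu' : u' ∈ vset (mIdeal R)) : u + u' ∈ vset (mIdeal R ^ 2) := by
  obtain ⟨f, hf, hfu⟩ := hu
  obtain ⟨f', hf', hfu'⟩ := hu'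
  refine ⟨f * f', sq (mIdeal R) ▸ Ideal.mul_mem_mul hf hf', ?_⟩
  rw [Subalgebra.coe_mul, order_mul, hfu, hfu', Nat.cast_add]

theorem vset_mIdeal_diff_sq_subset_minGens :
    vset (mIdeal R) \ vset (mIdeal R ^ 2) ⊆ minGens (valueSet R) := by
  rintro n ⟨hn, hsq⟩
  obtain ⟨hnV, hn0⟩ := mem_vset_mIdeal_iff.mp hn
  refine ⟨hnV, hn0, ?_⟩
  rintro ⟨u, u', hu, hu', hu0, hu'0, rfl⟩
  exact hsq (add_mem_vset_mIdeal_sq (mem_vset_mIdeal_iff.mpr ⟨hu, hu0⟩)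
    (mem_vset_mIdeal_iff.mpr ⟨hu', hu'0⟩))

section PolynomialApproximation

variable {x : k⟦X⟧} {w N : ℕ}

theorem exists_X_pow_succ_dvd_sub_smul_pow (hx : x.order = w)
    (hdvd : ∀ n ∈ valueSet R, n < N → w ∣ n) {f : k⟦X⟧} (hf : f ∈ R) {n : ℕ} (hn : n < N)
    (hfn : X ^ n ∣ f) : ∃ (a : k) (m : ℕ), X ^ (n + 1) ∣ f - a • x ^ m := by
  rcases (X_pow_dvd_iff_le_order.mp hfn).lt_or_eq with hlt | hfo
  · refine ⟨0, 0, X_pow_dvd_iff_le_order.mpr ?_⟩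
    simpa using Order.add_one_le_of_lt hlt
  · obtain ⟨m, rfl⟩ := hdvd n ⟨f, hf, hfo.symm⟩ hn
    have hxm : (x ^ m).order = (w * m : ℕ) := by simp [order_pow, hx, mul_comm]
    obtain ⟨a, ha⟩ := exists_X_pow_succ_dvd_sub_smul hfn hxm
    exact ⟨a, m, ha⟩

theorem exists_X_pow_dvd_sub_aeval (hxR : x ∈ R) (hx : x.order = w)
    (hdvd : ∀ n ∈ valueSet R, n < N → w ∣ n) {f : k⟦X⟧} (hf : f ∈ R) :
    ∃ p : Polynomial k, X ^ N ∣ f - Polynomial.aeval x p := by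
  suffices ∀ d, ∀ f ∈ R, X ^ (N - d) ∣ f → ∃ p : Polynomial k, X ^ N ∣ f - Polynomial.aeval x p
    from this N f hf (by simp)
  intro d
  induction d with
  | zero => exact fun f _ hf => ⟨0, by simpa using hf⟩
  | succ d ih =>
    intro f hf hfd
    rcases le_or_gt N d with hNd | hdN
    · exact ih f hf (by rwa [show N - d = N - (d + 1) by omega])
    obtain ⟨a, m, ha⟩ :=
      exists_X_pow_succ_dvd_sub_smul_pow hx hdvd hf (show N - (d + 1) < N by omega) hfd
    obtain ⟨p, hp⟩ := ih _ (R.sub_mem hf (R.smul_mem (R.pow_mem hxR m) a))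
      (by rwa [show N - d = N - (d + 1) + 1 by omega])
    refine ⟨a • Polynomial.X ^ m + p, ?_⟩
    rwa [map_add, map_smul, map_pow, Polynomial.aeval_X, ← sub_sub]

theorem exists_X_dvd_and_X_pow_dvd_sub_aeval (hxR : x ∈ R) (hx : x.order = w) (hw : w ≠ 0)
    (hN : N ≠ 0) (hdvd : ∀ n ∈ valueSet R, n < N → w ∣ n) {f : R} (hf : f ∈ mIdeal R) :
    ∃ p : Polynomial k, Polynomial.X ∣ p ∧ X ^ N ∣ (f : k⟦X⟧) - Polynomial.aeval x p := by
  obtain ⟨p, hp⟩ := exists_X_pow_dvd_sub_aeval hxR hx hdvd f.2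
  refine ⟨p, Polynomial.X_dvd_iff.mpr ?_, hp⟩
  have hx0 : constantCoeff x = 0 :=
    order_ne_zero_iff_constCoeff_eq_zero.mp (by rw [hx]; exact_mod_cast hw)
  have h0 := X_dvd_iff.mp ((dvd_pow_self X hN).trans hp)
  rwa [map_sub, constantCoeff_aeval hx0, mem_mIdeal_iff.mp hf, zero_sub, neg_eq_zero] at h0

theorem exists_X_sq_dvd_and_X_pow_dvd_sub_aeval (hxR : x ∈ R) (hx : x.order = w) (hw : w ≠ 0)
    (hwN : w ≤ N) (hdvd : ∀ n ∈ valueSet R, n < N → w ∣ n) {g : R} (hg : g ∈ mIdeal R ^ 2) :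
    ∃ q : Polynomial k, Polynomial.X ^ 2 ∣ q ∧
      X ^ (w + N) ∣ (g : k⟦X⟧) - Polynomial.aeval x q := by
  rw [sq] at hg
  refine Submodule.mul_induction_on hg (fun f hf f' hf' => ?_) fun g g' hg hg' => ?_
  · obtain ⟨p, hp, hfp⟩ :=
      exists_X_dvd_and_X_pow_dvd_sub_aeval hxR hx hw (by omega) hdvd hf
    obtain ⟨p', hp', hfp'⟩ :=
      exists_X_dvd_and_X_pow_dvd_sub_aeval hxR hx hw (by omega) hdvd hf'
    have hXx : X ^ w ∣ x := X_pow_dvd_iff_le_order.mpr hx.ge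
    have hpx : X ^ w ∣ Polynomial.aeval x p :=
      hXx.trans (by simpa using Polynomial.aeval_dvd x hp)
    have hp'x : X ^ w ∣ Polynomial.aeval x p' :=
      hXx.trans (by simpa using Polynomial.aeval_dvd x hp')
    refine ⟨p * p', by rw [sq]; exact mul_dvd_mul hp hp', ?_⟩
    have hexpand : ((f * f' : R) : k⟦X⟧) - Polynomial.aeval x (p * p') =
        (f - Polynomial.aeval x p) * (f' - Polynomial.aeval x p') +
        (f - Polynomial.aeval x p) * Polynomial.aeval x p' +
        Polynomial.aeval x p * (f' - Polynomial.aeval x p') := by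
      rw [Subalgebra.coe_mul, map_mul]; ring
    rw [hexpand, pow_add]
    refine dvd_add (dvd_add ?_ ?_) (mul_dvd_mul hpx hfp')
    · exact (mul_dvd_mul_right (pow_dvd_pow X hwN) _).trans (mul_dvd_mul hfp hfp')
    · rw [mul_comm]; exact mul_dvd_mul hfp hp'x
  · obtain ⟨q, hq, hgq⟩ := hg
    obtain ⟨q', hq', hgq'⟩ := hg'
    refine ⟨q + q', dvd_add hq hq', ?_⟩
    rw [Subalgebra.coe_add, map_add, add_sub_add_comm]
    exact dvd_add hgq hgq'

theorem exists_two_le_and_eq_mul_of_mem_vset_mIdeal_sq (hxR : x ∈ R) (hx : x.order = w)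
    (hw : w ≠ 0) (hwN : w ≤ N) (hdvd : ∀ n ∈ valueSet R, n < N → w ∣ n) {n : ℕ}
    (hn : n ∈ vset (mIdeal R ^ 2)) (hlt : n < w + N) : ∃ m, 2 ≤ m ∧ n = m * w := by
  obtain ⟨g, hg, hgn⟩ := hn
  obtain ⟨q, hq, hgq⟩ := exists_X_sq_dvd_and_X_pow_dvd_sub_aeval hxR hx hw hwN hdvd hg
  have hqn : (Polynomial.aeval x q).order = n :=
    (order_eq_of_X_pow_dvd_sub hgq (by rw [hgn]; exact_mod_cast hlt)).symm.trans hgn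
  have hq0 : q ≠ 0 := by
    rintro rfl
    simp at hqn
  refine ⟨q.natTrailingDegree, Polynomial.le_natTrailingDegree hq0 fun m hm =>
    Polynomial.X_pow_dvd_iff.mp hq m hm, ?_⟩
  exact_mod_cast hqn.symm.trans (order_aeval hx hw hq0)

end PolynomialApproximation

end ValueSets

theorem first_two_herzogKunz_eq_first_two_minGens_general {k : Type*} [Field k]
    (R : Subalgebra k (PowerSeries k))
    (a₁ a₂ w₁ w₂ : ℕ)
    (ha₁ : IsLeast (vset (mIdeal R) \ vset ((mIdeal R) ^ 2)) a₁)
    (ha₂ : IsLeast ((vset (mIdeal R) \ vset ((mIdeal R) ^ 2)) \ {a₁}) a₂)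
    (hw₁ : IsLeast (minGens (valueSet R)) w₁)
    (hw₂ : IsLeast (minGens (valueSet R) \ {w₁}) w₂) :
    a₁ = w₁ ∧ a₂ = w₂ := by
  obtain ⟨hw₁V, hw₁0, -⟩ := hw₁.1
  obtain ⟨⟨hw₂V, hw₂0, -⟩, -⟩ := hw₂.1
  have hw₁₂ : w₁ ≤ w₂ := hw₁.2 hw₂.1.1
  obtain ⟨x, hxR, hx⟩ : ∃ x ∈ R, x.order = w₁ := hw₁V
  have hvals {n : ℕ} (hn : n ∈ vset (mIdeal R ^ 2)) (hlt : n < w₁ + w₂) :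
      ∃ m, 2 ≤ m ∧ n = m * w₁ :=
    exists_two_le_and_eq_mul_of_mem_vset_mIdeal_sq hxR hx hw₁0 hw₁₂
      (fun _ hn hlt => dvd_of_lt_of_mem_lowerBounds_minGens hw₂.2 hn hlt) hn hlt
  have hw₁HK : w₁ ∈ vset (mIdeal R) \ vset (mIdeal R ^ 2) := by
    refine ⟨mem_vset_mIdeal_iff.mpr ⟨hw₁.1.1, hw₁0⟩, fun hsq => ?_⟩
    obtain ⟨m, hm, hmw⟩ := hvals hsq (by omega)
    have := Nat.mul_le_mul_right w₁ hm
    omega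
  have hw₂HK : w₂ ∈ vset (mIdeal R) \ vset (mIdeal R ^ 2) := by
    refine ⟨mem_vset_mIdeal_iff.mpr ⟨hw₂V, hw₂0⟩, fun hsq => ?_⟩
    obtain ⟨m, hm, hmw⟩ := hvals hsq (by omega)
    exact mul_notMem_minGens (V := valueSemigroup R) hw₁.1.1 hm (hmw ▸ hw₂.1.1)
  have hsub := vset_mIdeal_diff_sq_subset_minGens (R := R)
  have h₁ : a₁ = w₁ := le_antisymm (ha₁.2 hw₁HK) (ha₁.mono hw₁ hsub)
  subst h₁
  exact ⟨rfl, le_antisymm (ha₂.2 ⟨hw₂HK, hw₂.1.2⟩)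
    (ha₂.mono hw₂ (Set.sdiff_subset_sdiff_left hsub))⟩

/-- the two smallest elements of the Herzog–Kunz set `v(𝔪)\v(𝔪²)` agree with
the two smallest minimal generators of the value semigroup `V(R)`. -/
theorem first_two_herzogKunz_eq_first_two_minGens {k : Type*} [Field k]
    (R : Subalgebra k (PowerSeries k)) (c : ℕ) (hc1 : 1 ≤ c)
    (hcond : ∀ f : PowerSeries k, (X : PowerSeries k) ^ c * f ∈ R)
    (a₁ a₂ w₁ w₂ : ℕ)
    (ha₁ : IsLeast (vset (mIdeal R) \ vset ((mIdeal R) ^ 2)) a₁)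
    (ha₂ : IsLeast ((vset (mIdeal R) \ vset ((mIdeal R) ^ 2)) \ {a₁}) a₂)
    (hw₁ : IsLeast (minGens (valueSet R)) w₁)
    (hw₂ : IsLeast (minGens (valueSet R) \ {w₁}) w₂) :
    a₁ = w₁ ∧ a₂ = w₂ :=
  first_two_herzogKunz_eq_first_two_minGens_general R a₁ a₂ w₁ w₂ ha₁ ha₂ hw₁ hw₂
end

section
/- Let R ⊆ k[[t]] be a k-subalgebra with 𝔪 = R ∩ t·k[[t]] and t^c·k[[t]] ⊆ R, and let a_n = max(v(𝔪)\v(𝔪²)). Then every f ∈ R with v(f) > a_n lies in 𝔪². -/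
open PowerSeries

/-!
Every series of order `≥ 2(c+1)` factors as `t^(c+1) · (t^(c+1) g)` with both factors in `𝔪`,
so lies in `𝔪²`. Below that bound one descends: if `aₙ < v(f) = m`, then `m ∈ v(𝔪)`, so by
maximality of `aₙ` some `g ∈ 𝔪²` has `v(g) = m`; subtracting the scalar multiple of `g` that
cancels the leading term of `f` raises the order, and after finitely many steps it exceeds
`2(c+1)`.
-/

theorem PowerSeries.lt_order_sub_smul {k : Type*} [Field k] {f g : PowerSeries k} {m : ℕ}
    (hf : (m : ℕ∞) ≤ f.order) (hg : g.order = m) :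
    (m : ℕ∞) < (f - (coeff m f / coeff m g) • g).order := by
  have hgm : coeff m g ≠ 0 := (order_eq_nat.mp hg).1
  rw [← ENat.add_one_le_iff (ENat.natCast_ne_top m), ← Nat.cast_add_one]
  refine nat_le_order _ _ fun i hi => ?_
  rcases (Nat.lt_succ_iff.mp hi).lt_or_eq with hlt | rfl
  · simp [coeff_of_lt_order i ((Nat.cast_lt.mpr hlt).trans_le hf),
      coeff_of_lt_order i (hg ▸ Nat.cast_lt.mpr hlt)]
  · simp [div_mul_cancel₀ _ hgm]

section

variable {k : Type*} [Field k] {R : Subalgebra k (PowerSeries k)}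

theorem mem_mIdeal_iff_one_le_order {f : R} :
    f ∈ mIdeal R ↔ 1 ≤ (f : PowerSeries k).order := by
  simp [mIdeal, RingHom.mem_ker, one_le_order_iff_constCoeff_eq_zero]

theorem mem_of_le_order_of_mem_vset {I : Ideal R} {m : ℕ} (hm : m ∈ vset I)
    (hI : ∀ g : R, (m : ℕ∞) < (g : PowerSeries k).order → g ∈ I) {f : R}
    (hf : (m : ℕ∞) ≤ (f : PowerSeries k).order) : f ∈ I := by
  obtain ⟨g, hgI, hg⟩ := hm
  set a := coeff m (f : PowerSeries k) / coeff m (g : PowerSeries k)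
  have hsub : f - a • g ∈ I := hI _ (by simpa using lt_order_sub_smul hf hg)
  simpa using I.add_mem hsub (I.smul_of_tower_mem a hgI)

theorem forall_mem_of_lt_order {I : Ideal R} {a N : ℕ}
    (hN : ∀ f : R, (N : ℕ∞) ≤ (f : PowerSeries k).order → f ∈ I)
    (hv : ∀ (f : R) (m : ℕ), a < m → (f : PowerSeries k).order = m → m ∈ vset I)
    (f : R) (hf : (a : ℕ∞) < (f : PowerSeries k).order) : f ∈ I := by
  suffices h : ∀ m ≤ N, ∀ f : R, (a : ℕ∞) < (f : PowerSeries k).order →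
      (m : ℕ∞) ≤ (f : PowerSeries k).order → f ∈ I from h 0 N.zero_le f hf (by simp)
  intro m hmN
  induction hmN using Nat.decreasingInduction with
  | self => exact fun f _ hf => hN f hf
  | of_succ m _ ih =>
    intro f haf hmf
    rcases hmf.lt_or_eq with hlt | heq
    · exact ih f haf (by simpa [ENat.add_one_le_iff] using hlt)
    · have ham : (a : ℕ∞) < m := heq ▸ haf
      refine mem_of_le_order_of_mem_vset (hv f m (by exact_mod_cast ham) heq.symm)
        (fun g hg => ih g (ham.trans hg) ?_) hmf
      simpa [ENat.add_one_le_iff] using hg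

theorem mem_mIdeal_sq_of_two_mul_le_order {n : ℕ} (hn : n ≠ 0)
    (hcond : ∀ f : PowerSeries k, (X : PowerSeries k) ^ n * f ∈ R) {f : R}
    (hf : ((2 * n : ℕ) : ℕ∞) ≤ (f : PowerSeries k).order) : f ∈ mIdeal R ^ 2 := by
  obtain ⟨h, hh⟩ : (X : PowerSeries k) ^ (2 * n) ∣ (f : PowerSeries k) :=
    X_pow_dvd_iff.mpr fun i hi => coeff_of_lt_order i ((Nat.cast_lt.mpr hi).trans_le hf)
  have hXn : (X : PowerSeries k) ^ n ∈ R := by simpa using hcond 1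
  have hfac : f = ⟨X ^ n, hXn⟩ * ⟨X ^ n * h, hcond h⟩ := by
    ext1
    simp [hh, two_mul, pow_add, mul_assoc]
  have hXn_order : 1 ≤ ((X : PowerSeries k) ^ n).order := by
    simpa [order_X_pow] using Nat.one_le_iff_ne_zero.mpr hn
  rw [hfac, sq]
  refine Ideal.mul_mem_mul ?_ ?_ <;> rw [mem_mIdeal_iff_one_le_order]
  · exact hXn_order
  · exact hXn_order.trans (le_self_add.trans (le_order_mul (X ^ n) h))

end

theorem mem_sq_of_order_gt_max_general {k : Type*} [Field k]
    (R : Subalgebra k (PowerSeries k)) (c : ℕ)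
    (hcond : ∀ f : PowerSeries k, (X : PowerSeries k) ^ c * f ∈ R)
    (aₙ : ℕ) (han : IsGreatest (vset (mIdeal R) \ vset ((mIdeal R) ^ 2)) aₙ) :
    ∀ f : R, (aₙ : ℕ∞) < (f : PowerSeries k).order → f ∈ (mIdeal R) ^ 2 := by
  have hcond' : ∀ f : PowerSeries k, (X : PowerSeries k) ^ (c + 1) * f ∈ R := fun f => by
    simpa [pow_succ, mul_assoc] using hcond (X * f)
  refine forall_mem_of_lt_order (N := 2 * (c + 1))
    (fun f => mem_mIdeal_sq_of_two_mul_le_order c.succ_ne_zero hcond') fun f m ham hfm => ?_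
  have hfm_mem : m ∈ vset (mIdeal R) :=
    ⟨f, mem_mIdeal_iff_one_le_order.mpr (by rw [hfm]; exact_mod_cast Nat.one_le_of_lt ham), hfm⟩
  by_contra hsq
  exact (han.2 ⟨hfm_mem, hsq⟩).not_gt ham

/-- if `a_n` is the largest element of the Herzog–Kunz set `v(𝔪)\v(𝔪²)`,
then every `f ∈ R` with `v(f) > a_n` lies in `𝔪²`. -/
theorem mem_sq_of_order_gt_max {k : Type*} [Field k]
    (R : Subalgebra k (PowerSeries k)) (c : ℕ) (hc1 : 1 ≤ c)
    (hcond : ∀ f : PowerSeries k, (X : PowerSeries k) ^ c * f ∈ R)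
    (aₙ : ℕ) (han : IsGreatest (vset (mIdeal R) \ vset ((mIdeal R) ^ 2)) aₙ) :
    ∀ f : R, (aₙ : ℕ∞) < (f : PowerSeries k).order → f ∈ (mIdeal R) ^ 2 :=
  mem_sq_of_order_gt_max_general R c hcond aₙ han
end

section
/- Let R ⊆ k[[t]] be a k-subalgebra with 𝔪 = R ∩ t·k[[t]], t^{c_R}·k[[t]] ⊆ R, and Herzog–Kunz set {a₁ < … < a_n} = v(𝔪)\v(𝔪²). Suppose a_{i₀} ≥ c_R for some i₀. Then there exist Herzog–Kunz generators x₁,…,x_n of 𝔪 (elements with v(xᵢ) = aᵢ generating 𝔪) such that xᵢ = t^{aᵢ} for all i ≥ i₀. -/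
open PowerSeries

/-!
Put `xᵢ = t^{aᵢ}` for `i ≥ i₀` (these lie in `R` since `aᵢ ≥ c`) and let `xᵢ ∈ 𝔪` be any element of
order `aᵢ` otherwise; let `N` be the ideal they generate. Since `x_{i₀} = t^{a_{i₀}}`, every element
of `R` of order `≥ B := a_{i₀} + c` is a multiple `x_{i₀} · t^c h` in `N`. Every order of an element
of `𝔪` is attained in `N + 𝔪²` (by `𝔪²` or, for the Herzog–Kunz values, by some `xᵢ`), so killing
leading coefficients one at a time shows `𝔪 ⊆ N + 𝔪²`. Iterating, `𝔪 ⊆ N + 𝔪^B`, and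
`𝔪^B ⊆ t^B k[[t]] ∩ R ⊆ N`.
-/

theorem Ideal.le_sup_pow_of_le_sup_sq {A : Type*} [CommSemiring A] {M N : Ideal A}
    (h : M ≤ N ⊔ M ^ 2) (j : ℕ) : M ≤ N ⊔ M ^ j := by
  induction j with
  | zero => simp
  | succ j ih =>
    calc M ≤ N ⊔ M * M := by rwa [← sq]
      _ ≤ N ⊔ M * (N ⊔ M ^ j) := sup_le_sup_left (Ideal.mul_mono_right ih) _
      _ = N ⊔ M * N ⊔ M ^ (j + 1) := by rw [Ideal.mul_sup, ← pow_succ', sup_assoc]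
      _ ≤ N ⊔ M ^ (j + 1) := sup_le_sup_right (sup_le le_rfl Ideal.mul_le_right) _

theorem PowerSeries.le_order_iff_X_pow_dvd {A : Type*} [Semiring A] {f : A⟦X⟧} {m : ℕ} :
    (m : ℕ∞) ≤ f.order ↔ X ^ m ∣ f := by
  rw [X_pow_dvd_iff]
  exact ⟨fun h i hi => coeff_of_lt_order i (lt_of_lt_of_le (by exact_mod_cast hi) h),
    nat_le_order f m⟩

theorem PowerSeries.succ_le_order_sub_smul {k : Type*} [Field k] {f g : k⟦X⟧} {m : ℕ}
    (hf : f.order = m) (hg : (m : ℕ∞) ≤ g.order) :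
    ((m + 1 : ℕ) : ℕ∞) ≤ (g - (coeff m g / coeff m f) • f).order := by
  have hfm : coeff m f ≠ 0 := (order_eq_nat.mp hf).1
  refine nat_le_order _ _ fun i hi => ?_
  rw [map_sub, coeff_smul, smul_eq_mul]
  rcases (Nat.lt_succ_iff.mp hi).lt_or_eq with hlt | rfl
  · have hi' : (i : ℕ∞) < m := by exact_mod_cast hlt
    rw [coeff_of_lt_order i (hi'.trans_le hg), coeff_of_lt_order i (hf ▸ hi'), mul_zero, sub_zero]
  · rw [div_mul_cancel₀ _ hfm, sub_self]

namespace Subalgebra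

variable {k : Type*} [Field k] {R : Subalgebra k k⟦X⟧}

variable (R) in
noncomputable def tPowIdeal (m : ℕ) : Ideal R :=
  (Ideal.span {(X : k⟦X⟧) ^ m}).comap R.val

theorem mem_tPowIdeal {m : ℕ} {g : R} : g ∈ R.tPowIdeal m ↔ X ^ m ∣ (g : k⟦X⟧) :=
  Ideal.mem_span_singleton

theorem mem_mIdeal_iff_order_ne_zero {g : R} : g ∈ mIdeal R ↔ (g : k⟦X⟧).order ≠ 0 :=
  RingHom.mem_ker.trans order_ne_zero_iff_constCoeff_eq_zero.symm

theorem mIdeal_pow_le_tPowIdeal (j : ℕ) : mIdeal R ^ j ≤ R.tPowIdeal j :=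
  calc mIdeal R ^ j ≤ R.tPowIdeal 1 ^ j :=
        Ideal.pow_right_mono (fun g hg => by
          rw [mem_tPowIdeal, pow_one, X_dvd_iff]; exact RingHom.mem_ker.mp hg) j
    _ ≤ (Ideal.span {(X : k⟦X⟧)} ^ j).comap R.val := by
        simpa only [tPowIdeal, pow_one] using Ideal.le_comap_pow _ j
    _ = R.tPowIdeal j := by rw [Ideal.span_singleton_pow, tPowIdeal]

theorem X_pow_mem {c m : ℕ} (hcond : ∀ f : k⟦X⟧, X ^ c * f ∈ R) (h : c ≤ m) :
    (X : k⟦X⟧) ^ m ∈ R := by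
  rw [← Nat.add_sub_cancel' h, pow_add]
  exact hcond _

theorem tPowIdeal_add_le {c a : ℕ} (hcond : ∀ f : k⟦X⟧, X ^ c * f ∈ R) {N : Ideal R} {y : R}
    (hy : (y : k⟦X⟧) = X ^ a) (hyN : y ∈ N) : R.tPowIdeal (a + c) ≤ N := by
  intro g hg
  obtain ⟨f, hf⟩ := mem_tPowIdeal.mp hg
  have hg_eq : g = y * ⟨X ^ c * f, hcond f⟩ :=
    Subtype.ext (by simp only [hf, hy, MulMemClass.coe_mul, pow_add, mul_assoc])
  exact hg_eq ▸ N.mul_mem_right _ hyN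

theorem le_of_tPowIdeal_le_of_forall_order {I J : Ideal R} {B : ℕ} (hJI : J ≤ I)
    (hB : R.tPowIdeal B ≤ J)
    (hfill : ∀ g ∈ I, ∀ m : ℕ, (g : k⟦X⟧).order = m → ∃ h ∈ J, (h : k⟦X⟧).order = m) :
    I ≤ J := by
  suffices key : ∀ d m : ℕ, B ≤ m + d → ∀ g ∈ I, (m : ℕ∞) ≤ (g : k⟦X⟧).order → g ∈ J from
    fun g hg => key B 0 (by omega) g hg bot_le
  intro d
  induction d with
  | zero =>
    exact fun m hm g _ hg =>
      hB (mem_tPowIdeal.mpr (le_order_iff_X_pow_dvd.mp ((Nat.cast_le.mpr hm).trans hg)))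
  | succ d ih =>
    intro m hm g hgI hg
    rcases hg.lt_or_eq with hlt | hgm
    · exact ih (m + 1) (by omega) g hgI (Order.add_one_le_of_lt hlt)
    obtain ⟨h, hhJ, hh⟩ := hfill g hgI m hgm.symm
    set r : k := coeff m (g : k⟦X⟧) / coeff m (h : k⟦X⟧)
    have hsub : g - r • h ∈ J :=
      ih (m + 1) (by omega) _ (sub_mem hgI (I.smul_of_tower_mem r (hJI hhJ)))
        (succ_le_order_sub_smul hh hg)
    simpa using add_mem hsub (J.smul_of_tower_mem r hhJ)

theorem eq_mIdeal_of_tPowIdeal_le {N : Ideal R} {B : ℕ} (hN : N ≤ mIdeal R)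
    (hB : R.tPowIdeal B ≤ N) (hHK : vset (mIdeal R) \ vset (mIdeal R ^ 2) ⊆ vset N) :
    N = mIdeal R := by
  have hsq : mIdeal R ≤ N ⊔ mIdeal R ^ 2 := by
    refine le_of_tPowIdeal_le_of_forall_order (sup_le hN (Ideal.pow_le_self two_ne_zero))
      (hB.trans le_sup_left) fun g hg m hm => ?_
    by_cases hm2 : m ∈ vset (mIdeal R ^ 2)
    · obtain ⟨h, hh, hho⟩ := hm2
      exact ⟨h, Ideal.mem_sup_right hh, hho⟩
    · obtain ⟨h, hh, hho⟩ := hHK ⟨⟨g, hg, hm⟩, hm2⟩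
      exact ⟨h, Ideal.mem_sup_left hh, hho⟩
  refine le_antisymm hN ?_
  calc mIdeal R ≤ N ⊔ mIdeal R ^ B := Ideal.le_sup_pow_of_le_sup_sq hsq B
    _ ≤ N ⊔ R.tPowIdeal B := sup_le_sup_left (mIdeal_pow_le_tPowIdeal B) _
    _ = N := sup_eq_left.mpr hB

end Subalgebra

theorem exists_monomial_tail_generators_general {k : Type*} [Field k]
    (R : Subalgebra k (PowerSeries k)) (c : ℕ)
    (hcond : ∀ f : PowerSeries k, (X : PowerSeries k) ^ c * f ∈ R)
    (n : ℕ) (a : Fin n → ℕ) (ha : StrictMono a)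
    (hS : vset (mIdeal R) \ vset ((mIdeal R) ^ 2) = Set.range a)
    (i₀ : Fin n) (hi₀ : c ≤ a i₀) :
    ∃ x : Fin n → R,
      (∀ i, (x i : PowerSeries k).order = (a i : ℕ∞)) ∧
      Ideal.span (Set.range x) = mIdeal R ∧
      (∀ i, i₀ ≤ i → (x i : PowerSeries k) = (X : PowerSeries k) ^ (a i)) := by
  have hval : ∀ i, a i ∈ vset (mIdeal R) := fun i => (hS.symm ▸ Set.mem_range_self i).1
  choose f hf hf_order using hval
  let x : Fin n → R := fun i =>
    if h : i₀ ≤ i then ⟨X ^ a i, Subalgebra.X_pow_mem hcond (hi₀.trans (ha.monotone h))⟩ else f i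
  have hx_tail : ∀ i, i₀ ≤ i → (x i : k⟦X⟧) = X ^ a i := fun i h => by simp [x, h]
  have hx_order : ∀ i, (x i : k⟦X⟧).order = a i := fun i => by
    by_cases h : i₀ ≤ i
    · rw [hx_tail i h, order_X_pow]
    · simp [x, h, hf_order]
  have hx_mem : ∀ i, x i ∈ mIdeal R := fun i => by
    rw [Subalgebra.mem_mIdeal_iff_order_ne_zero, hx_order, ← hf_order,
      ← Subalgebra.mem_mIdeal_iff_order_ne_zero]
    exact hf i
  refine ⟨x, hx_order, Subalgebra.eq_mIdeal_of_tPowIdeal_le (B := a i₀ + c) ?_ ?_ ?_, hx_tail⟩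
  · exact Ideal.span_le.mpr (Set.range_subset_iff.mpr hx_mem)
  · exact Subalgebra.tPowIdeal_add_le hcond (hx_tail i₀ le_rfl) (Ideal.subset_span ⟨i₀, rfl⟩)
  · rw [hS]
    rintro _ ⟨i, rfl⟩
    exact ⟨x i, Ideal.subset_span ⟨i, rfl⟩, hx_order i⟩

/-- if the Herzog–Kunz sequence `a₁ < … < a_n` satisfies `a_{i₀} ≥ c_R`,
then there are Herzog–Kunz generators `x₁,…,x_n` of `𝔪` with `xᵢ = t^{aᵢ}` for `i ≥ i₀`. -/
theorem exists_monomial_tail_generators {k : Type*} [Field k]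
    (R : Subalgebra k (PowerSeries k)) (c : ℕ) (hc1 : 1 ≤ c)
    (hcond : ∀ f : PowerSeries k, (X : PowerSeries k) ^ c * f ∈ R)
    (hleast : ∀ c' : ℕ, (∀ f : PowerSeries k, (X : PowerSeries k) ^ c' * f ∈ R) → c ≤ c')
    (n : ℕ) (a : Fin n → ℕ) (ha : StrictMono a)
    (hS : vset (mIdeal R) \ vset ((mIdeal R) ^ 2) = Set.range a)
    (i₀ : Fin n) (hi₀ : c ≤ a i₀) :
    ∃ x : Fin n → R,
      (∀ i, (x i : PowerSeries k).order = (a i : ℕ∞)) ∧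
      Ideal.span (Set.range x) = mIdeal R ∧
      (∀ i, i₀ ≤ i → (x i : PowerSeries k) = (X : PowerSeries k) ^ (a i)) :=
  exists_monomial_tail_generators_general R c hcond n a ha hS i₀ hi₀
end

section
/- The ring R' = k[[t⁵, t⁷, t¹²]] ⊆ k[[t]] (the closure of the k-algebra generated by t⁵, t⁷, t¹²) is strictly contained in R = k[[t⁵, t⁷, t¹² + t²³]]; specifically, t¹² + t²³ ∉ R', since the value semigroup of R' is generated by 5 and 7 and 23 ∉ ⟨5,7⟩. -/
open PowerSeries

/-! Every element of `k[t⁵, t⁷, t¹²]` is supported on the semigroup `⟨5, 7⟩`, and this support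
condition on a single coefficient passes to `t`-adic limits. Since `23 ∉ ⟨5, 7⟩`, the `t²³`
coefficient of every element of `k[[t⁵, t⁷, t¹²]]` vanishes, which excludes `t¹² + t²³`. -/

namespace PowerSeries

section Supported

variable {R : Type*} [CommSemiring R]

def supportedIn (S : AddSubmonoid ℕ) : Subalgebra R R⟦X⟧ where
  carrier := {f | ∀ n ∉ S, coeff n f = 0}
  mul_mem' {f g} hf hg n hn := by
    change coeff n (f * g) = 0
    rw [coeff_mul]
    refine Finset.sum_eq_zero fun ⟨i, j⟩ hij => ?_
    rw [Finset.HasAntidiagonal.mem_antidiagonal] at hij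
    by_cases hi : i ∈ S
    · have hj : j ∉ S := fun hj => hn (hij ▸ add_mem hi hj)
      rw [hg j hj, mul_zero]
    · rw [hf i hi, zero_mul]
  add_mem' hf hg n hn := by rw [map_add, hf n hn, hg n hn, add_zero]
  algebraMap_mem' r n hn := by
    rw [algebraMap_apply, Algebra.algebraMap_self, RingHom.id_apply, coeff_C,
      if_neg (by rintro rfl; exact hn S.zero_mem)]

theorem X_pow_mem_supportedIn {S : AddSubmonoid ℕ} {n : ℕ} (hn : n ∈ S) :
    (X : R⟦X⟧) ^ n ∈ supportedIn S := fun m hm => by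
  rw [coeff_X_pow, if_neg (by rintro rfl; exact hm hn)]

end Supported

theorem coeff_eq_of_lt_order_sub {R : Type*} [Ring R] {f g : R⟦X⟧} {n : ℕ}
    (h : (n : ℕ∞) < (f - g).order) : coeff n f = coeff n g :=
  sub_eq_zero.mp (by rw [← map_sub]; exact coeff_of_lt_order n h)

end PowerSeries

theorem twelve_mem_closure_five_seven : 12 ∈ AddSubmonoid.closure ({5, 7} : Set ℕ) :=
  (AddSubmonoid.mem_closure_pair 5 7 12).mpr ⟨1, 1, rfl⟩

theorem twentythree_notMem_closure_five_seven :
    23 ∉ AddSubmonoid.closure ({5, 7} : Set ℕ) := by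
  rw [AddSubmonoid.mem_closure_pair]
  rintro ⟨a, b, h⟩
  simp only [smul_eq_mul] at h
  omega

theorem adjoin_X_pow_five_seven_twelve_le_supportedIn {R : Type*} [CommSemiring R] :
    Algebra.adjoin R {(X : R⟦X⟧) ^ 5, X ^ 7, X ^ 12} ≤
      supportedIn (AddSubmonoid.closure {5, 7}) := by
  refine Algebra.adjoin_le ?_
  rintro _ (rfl | rfl | rfl)
  · exact X_pow_mem_supportedIn (AddSubmonoid.subset_closure (by simp))
  · exact X_pow_mem_supportedIn (AddSubmonoid.subset_closure (by simp))
  · exact X_pow_mem_supportedIn twelve_mem_closure_five_seven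

theorem adjoin_X_pow_five_seven_twelve_le {R : Type*} [CommSemiring R] :
    Algebra.adjoin R {(X : R⟦X⟧) ^ 5, X ^ 7, X ^ 12} ≤
      Algebra.adjoin R {(X : R⟦X⟧) ^ 5, X ^ 7, X ^ 12 + X ^ 23} := by
  refine Algebra.adjoin_le ?_
  have h5 : (X : R⟦X⟧) ^ 5 ∈ Algebra.adjoin R {(X : R⟦X⟧) ^ 5, X ^ 7, X ^ 12 + X ^ 23} :=
    Algebra.subset_adjoin (by simp)
  have h7 : (X : R⟦X⟧) ^ 7 ∈ Algebra.adjoin R {(X : R⟦X⟧) ^ 5, X ^ 7, X ^ 12 + X ^ 23} :=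
    Algebra.subset_adjoin (by simp)
  rintro _ (rfl | rfl | rfl)
  · exact h5
  · exact h7
  · rw [SetLike.mem_coe]
    convert mul_mem h5 h7 using 1
    rw [← pow_add]

/-- the ring `R' = k[[t⁵,t⁷,t¹²]]` (the `t`-adic closure of the `k`-algebra
generated by `t⁵, t⁷, t¹²`, i.e. the image of a power series ring in three variables) is
strictly contained in `R = k[[t⁵,t⁷,t¹²+t²³]]`; specifically `t¹²+t²³ ∈ R` but
`t¹²+t²³ ∉ R'`, since `23 ∉ ⟨5,7⟩`. -/
theorem truncation_can_shrink_ring {k : Type*} [Field k]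
    (R' R : Set (PowerSeries k))
    (hR' : ∀ g : PowerSeries k, g ∈ R' ↔ ∀ d : ℕ, ∃ p ∈ Algebra.adjoin k
        ({(X : PowerSeries k) ^ 5, (X : PowerSeries k) ^ 7, (X : PowerSeries k) ^ 12} :
          Set (PowerSeries k)),
        (d : ℕ∞) < (g - p).order)
    (hR : ∀ g : PowerSeries k, g ∈ R ↔ ∀ d : ℕ, ∃ p ∈ Algebra.adjoin k
        ({(X : PowerSeries k) ^ 5, (X : PowerSeries k) ^ 7,
          (X : PowerSeries k) ^ 12 + (X : PowerSeries k) ^ 23} : Set (PowerSeries k)),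
        (d : ℕ∞) < (g - p).order) :
    R' ⊆ R ∧ ((X : PowerSeries k) ^ 12 + (X : PowerSeries k) ^ 23) ∈ R ∧
      ((X : PowerSeries k) ^ 12 + (X : PowerSeries k) ^ 23) ∉ R' := by
  refine ⟨fun g hg => ?_, ?_, fun hmem => ?_⟩
  · refine (hR g).mpr fun d => ?_
    obtain ⟨p, hp, hd⟩ := (hR' g).mp hg d
    exact ⟨p, adjoin_X_pow_five_seven_twelve_le hp, hd⟩
  · refine (hR _).mpr fun d => ⟨X ^ 12 + X ^ 23, Algebra.subset_adjoin (by simp), ?_⟩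
    simp
  · obtain ⟨p, hp, hd⟩ := (hR' _).mp hmem 23
    have hp23 : coeff 23 p = 0 :=
      adjoin_X_pow_five_seven_twelve_le_supportedIn hp 23 twentythree_notMem_closure_five_seven
    have h23 := coeff_eq_of_lt_order_sub hd
    simp [hp23, coeff_X_pow] at h23
end
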